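/- arXiv:1406.1709 — 4 statements merged into one kernel-verified Lean document; each statement's English description precedes it below -/
import Mathlib

section
/- For every m ≥ 0, the number of walks of length 2m constrained to the first octant (all positions (x,y) satisfy x ≥ y ≥ 0) equals (2m+1)·C_m², and the number of walks of length 2m+1 constrained to the first octant equals (2m+1)·C_m·C_{m+1}, where C_m denotes the m-th Catalan number. -/
/-- A walk of length `n` with unit steps N, S, E, W. -/
def IsWalk {n : ℕ} (w : Fin n → ℤ × ℤ) : Prop :=
  ∀ l, w l = (0, 1) ∨ w l = (0, -1) ∨ w l = (1, 0) ∨ w l = (-1, 0)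

/-- Position of the walk `w` after `a` steps. -/
def pos {n : ℕ} (w : Fin n → ℤ × ℤ) (a : ℕ) : ℤ × ℤ :=
  ∑ l ∈ Finset.univ.filter (fun l : Fin n => (l : ℕ) < a), w l

namespace Oct

/-- binomial coefficient with integer lower index -/
def bn (n : ℕ) (t : ℤ) : ℤ := if 0 ≤ t ∧ t ≤ n then ((n.choose t.toNat : ℕ) : ℤ) else 0

lemma bn_nonneg (n : ℕ) (t : ℤ) : 0 ≤ bn n t := by
  unfold bn; split <;> positivity

lemma bn_pascal (n : ℕ) (t : ℤ) : bn (n+1) t = bn n t + bn n (t-1) := by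
  unfold bn
  split_ifs with h1 h2 h3 h2 h3 <;> push_cast <;> try omega
  · -- 0 ≤ t ≤ n+1, 0 ≤ t ≤ n, 0 ≤ t-1 ≤ n
    obtain ⟨h1a, h1b⟩ := h1
    have ht1 : (1:ℤ) ≤ t := by omega
    have : t.toNat = (t-1).toNat + 1 := by omega
    rw [this, Nat.choose_succ_succ']
    push_cast; ring
  · -- 0 ≤ t ≤ n+1, 0 ≤ t ≤ n, ¬(0 ≤ t-1 ≤ n) : t = 0
    have : t = 0 := by omega
    subst this; simp
  · -- 0 ≤ t ≤ n+1, ¬(0≤t≤n) : t = n+1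
    have : t = (n:ℤ)+1 := by omega
    subst this
    have h1' : ((n:ℤ)+1).toNat = n+1 := by omega
    have h2' : ((n:ℤ)+1-1).toNat = n := by omega
    rw [h1', h2', Nat.choose_self, Nat.choose_self]
    simp

lemma bn_symm (n : ℕ) (t : ℤ) : bn n t = bn n (n - t) := by
  unfold bn
  split_ifs with h1 h2 h2 <;> try omega
  · congr 1
    have ht : t.toNat ≤ n := by omega
    have : ((n:ℤ) - t).toNat = n - t.toNat := by omega
    rw [this, Nat.choose_symm ht]

lemma bn_zero_of_gt (n : ℕ) (t : ℤ) (h : (n:ℤ) < t) : bn n t = 0 := by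
  unfold bn; rw [if_neg]; omega

lemma bn_zero_of_neg (n : ℕ) (t : ℤ) (h : t < 0) : bn n t = 0 := by
  unfold bn; rw [if_neg]; omega

/-- LGV determinant: number of octant walks of length n ending at state (tA,tB). -/
def Dd (n : ℕ) (tA tB : ℤ) : ℤ :=
  (bn n tA - bn n (tA+1)) * (bn n tB - bn n (tB+3))
    - (bn n (tB+1) - bn n (tB+2)) * (bn n (tA-1) - bn n (tA+2))

lemma Dd_rec (n : ℕ) (tA tB : ℤ) :
    Dd (n+1) tA tB = Dd n tA tB + Dd n (tA-1) tB + Dd n tA (tB-1) + Dd n (tA-1) (tB-1) := by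
  unfold Dd
  rw [bn_pascal n tA, bn_pascal n (tA+1), bn_pascal n (tB+1), bn_pascal n (tB+2),
    bn_pascal n tB, bn_pascal n (tB+3), bn_pascal n (tA-1), bn_pascal n (tA+2)]
  have e1 : tA + 1 - 1 = tA := by ring
  have e2 : tB + 1 - 1 = tB := by ring
  have e3 : tB + 2 - 1 = tB + 1 := by ring
  have e4 : tB + 3 - 1 = tB + 2 := by ring
  have e5 : tA + 2 - 1 = tA + 1 := by ring
  have e6 : tA - 1 + 1 = tA := by ring
  have e7 : tA - 1 + 2 = tA + 1 := by ring
  have e8 : tB - 1 + 1 = tB := by ring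
  have e9 : tB - 1 + 2 = tB + 1 := by ring
  have e10 : tB - 1 + 3 = tB + 2 := by ring
  have e11 : tA - 1 - 1 = tA - 2 := by ring
  rw [e1, e2, e3, e4, e5, e6, e7, e8, e9, e10, e11]
  ring

lemma Dd_wall1 (n : ℕ) (tA tB : ℤ) (h : 2*tA = (n:ℤ) - 1) : Dd n tA tB = 0 := by
  unfold Dd
  have h1 : bn n tA = bn n (tA+1) := by
    rw [bn_symm n tA]; congr 1; omega
  have h2 : bn n (tA-1) = bn n (tA+2) := by
    rw [bn_symm n (tA-1)]; congr 1; omega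
  rw [h1, h2]; ring

lemma Dd_wall2 (n : ℕ) (tA : ℤ) : Dd n tA (tA - 1) = 0 := by
  unfold Dd
  have e1 : tA - 1 + 1 = tA := by ring
  have e2 : tA - 1 + 2 = tA + 1 := by ring
  have e3 : tA - 1 + 3 = tA + 2 := by ring
  rw [e1, e2, e3]; ring


def SF : Finset (ℤ × ℤ) := {(0, 1), (0, -1), (1, 0), (-1, 0)}

lemma isWalk_iff {n : ℕ} (w : Fin n → ℤ × ℤ) : IsWalk w ↔ ∀ l, w l ∈ SF := by
  unfold IsWalk SF
  simp [Finset.mem_insert]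

def Valid (p : ℤ × ℤ) : Prop := p.2 ≤ p.1 ∧ 0 ≤ p.2

def Good {n : ℕ} (w : Fin n → ℤ × ℤ) : Prop :=
  IsWalk w ∧ ∀ a ≤ n, (pos w a).2 ≤ (pos w a).1 ∧ 0 ≤ (pos w a).2

lemma pos_def {n : ℕ} (w : Fin n → ℤ × ℤ) (a : ℕ) :
    pos w a = ∑ l : Fin n, if (l : ℕ) < a then w l else 0 := by
  rw [pos, Finset.sum_filter]

lemma pos_zero {n : ℕ} (w : Fin n → ℤ × ℤ) : pos w 0 = 0 := by
  rw [pos_def]; simp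

lemma pos_succ {n : ℕ} (w : Fin n → ℤ × ℤ) (a : ℕ) (h : a < n) :
    pos w (a+1) = pos w a + w ⟨a, h⟩ := by
  rw [pos_def, pos_def]
  have : ∀ l : Fin n, (if (l : ℕ) < a + 1 then w l else 0)
      = (if (l : ℕ) < a then w l else 0) + (if l = ⟨a, h⟩ then w l else 0) := by
    intro l
    by_cases h1 : (l : ℕ) < a
    · rw [if_pos (by omega), if_pos h1, if_neg (by intro he; subst he; simp at h1)]
      simp
    · by_cases h2 : l = ⟨a, h⟩
      · subst h2; rw [if_pos (by simp), if_neg h1, if_pos rfl]; simp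
      · rw [if_neg, if_neg h1, if_neg h2]
        · simp
        · intro hlt
          apply h2
          apply Fin.ext
          simp only []
          omega
  rw [Finset.sum_congr rfl (fun l _ => this l), Finset.sum_add_distrib,
    Finset.sum_ite_eq' Finset.univ (⟨a, h⟩ : Fin n) w]
  simp

lemma pos_castSucc {n : ℕ} (w : Fin (n+1) → ℤ × ℤ) (a : ℕ) (ha : a ≤ n) :
    pos (Fin.init w) a = pos w a := by
  rw [pos_def, pos_def, Fin.sum_univ_castSucc]
  rw [if_neg (by simp; omega)]
  rw [add_zero]
  apply Finset.sum_congr rfl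
  intro l _
  simp [Fin.init]

lemma pos_top {n : ℕ} (w : Fin (n+1) → ℤ × ℤ) :
    pos w (n+1) = pos (Fin.init w) n + w (Fin.last n) := by
  rw [pos_succ w n (by omega), pos_castSucc w n le_rfl]
  rfl

lemma walkSet_finite (n : ℕ) : {w : Fin n → ℤ × ℤ | IsWalk w}.Finite := by
  have : {w : Fin n → ℤ × ℤ | IsWalk w} ⊆ Set.univ.pi (fun _ : Fin n => (SF : Set (ℤ × ℤ))) := by
    intro w hw
    intro l _
    exact (isWalk_iff w).mp hw l
  exact Set.Finite.subset (Set.Finite.pi (fun _ => (SF : Finset (ℤ×ℤ)).finite_toSet)) this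

lemma good_finite (n : ℕ) (P : (Fin n → ℤ × ℤ) → Prop) :
    {w : Fin n → ℤ × ℤ | Good w ∧ P w}.Finite := by
  apply Set.Finite.subset (walkSet_finite n)
  intro w hw
  exact hw.1.1

noncomputable instance instFinGood (n : ℕ) (P : (Fin n → ℤ × ℤ) → Prop) :
    Fintype {w : Fin n → ℤ × ℤ // Good w ∧ P w} :=
  (good_finite n P).fintype

/-- Number of good walks of length n ending at p. -/
noncomputable def wc (n : ℕ) (p : ℤ × ℤ) : ℕ :=
  Nat.card {w : Fin n → ℤ × ℤ // Good w ∧ pos w n = p}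

lemma wc_zero (p : ℤ × ℤ) : wc 0 p = if p = 0 then 1 else 0 := by
  unfold wc
  by_cases hp : p = 0
  · subst hp
    rw [if_pos rfl]
    have : Unique {w : Fin 0 → ℤ × ℤ // Good w ∧ pos w 0 = 0} := by
      refine ⟨⟨⟨fun l => l.elim0, ?_, ?_⟩⟩, ?_⟩
      · constructor
        · intro l; exact l.elim0
        · intro a ha
          interval_cases a
          rw [pos_zero]; exact ⟨le_rfl, le_rfl⟩
      · exact pos_zero _
      · intro w
        apply Subtype.ext
        funext l; exact l.elim0
    exact Nat.card_unique
  · rw [if_neg hp]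
    have : IsEmpty {w : Fin 0 → ℤ × ℤ // Good w ∧ pos w 0 = p} := by
      constructor
      rintro ⟨w, _, hw⟩
      exact hp (hw ▸ (pos_zero w))
    exact Nat.card_of_isEmpty

lemma wc_invalid (n : ℕ) (p : ℤ × ℤ) (hp : ¬ Valid p) : wc n p = 0 := by
  unfold wc
  have : IsEmpty {w : Fin n → ℤ × ℤ // Good w ∧ pos w n = p} := by
    constructor
    rintro ⟨w, ⟨_, hval⟩, hend⟩
    exact hp (hend ▸ ⟨(hval n le_rfl).1, (hval n le_rfl).2⟩)
  exact Nat.card_of_isEmpty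

lemma card_sigma' {ι : Type*} [Fintype ι] (f : ι → Type*) [∀ i, Fintype (f i)] :
    Nat.card (Σ i, f i) = ∑ i, Nat.card (f i) := by
  simp [Nat.card_eq_fintype_card, Fintype.card_sigma]

lemma good_init {n : ℕ} {w : Fin (n+1) → ℤ × ℤ} (h : Good w) : Good (Fin.init w) := by
  obtain ⟨hwalk, hval⟩ := h
  constructor
  · intro l; exact hwalk l.castSucc
  · intro a ha
    rw [pos_castSucc w a ha]
    exact hval a (by omega)

lemma pos_init_eq {n : ℕ} (w : Fin (n+1) → ℤ × ℤ) {p : ℤ × ℤ} (hend : pos w (n+1) = p) :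
    pos (Fin.init w) n = p - w (Fin.last n) := by
  have h := pos_top w
  rw [hend] at h
  rw [h]
  ring

lemma good_snoc {n : ℕ} {w' : Fin n → ℤ × ℤ} {s p : ℤ × ℤ} (hs : s ∈ SF)
    (h : Good w') (hend : pos w' n = p - s) (hp : Valid p) : Good (Fin.snoc w' s) := by
  obtain ⟨hwalk, hval⟩ := h
  constructor
  · rw [isWalk_iff]
    intro l
    refine Fin.lastCases ?_ ?_ l
    · rw [Fin.snoc_last]; exact hs
    · intro i
      rw [Fin.snoc_castSucc]
      exact (isWalk_iff _).mp hwalk i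
  · intro a ha
    rcases Nat.lt_or_ge a (n+1) with hlt | hge
    · have h' : a ≤ n := by omega
      rw [← pos_castSucc _ a h', Fin.init_snoc]
      exact hval a h'
    · have : a = n + 1 := by omega
      subst this
      rw [pos_top, Fin.init_snoc, Fin.snoc_last, hend]
      have h2 : p - s + s = p := by ring
      rw [h2]
      exact hp

lemma pos_snoc_end {n : ℕ} (w' : Fin n → ℤ × ℤ) (s p : ℤ × ℤ) (hend : pos w' n = p - s) :
    pos (Fin.snoc w' s) (n+1) = p := by
  rw [pos_top, Fin.init_snoc, Fin.snoc_last, hend]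
  ring

lemma wc_succ (n : ℕ) (p : ℤ × ℤ) (hp : Valid p) :
    wc (n+1) p = ∑ s ∈ SF, wc n (p - s) := by
  classical
  unfold wc
  set α := {w : Fin (n+1) → ℤ × ℤ // Good w ∧ pos w (n+1) = p} with hα
  have hmem : ∀ w : α, w.1 (Fin.last n) ∈ SF := fun w => (isWalk_iff _).mp w.2.1.1 _
  let f : α → ↥SF := fun w => ⟨w.1 (Fin.last n), hmem w⟩
  have h1 : Nat.card α = ∑ s : ↥SF, Nat.card {w : α // f w = s} := by
    rw [← Nat.card_congr (Equiv.sigmaFiberEquiv f)]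
    exact card_sigma' _
  have h2 : ∀ s : ↥SF, Nat.card {w : α // f w = s} = wc n (p - (s : ℤ × ℤ)) := by
    intro s
    apply Nat.card_congr
    have e1 : {w : α // f w = s} ≃ {w : α // w.1 (Fin.last n) = (s : ℤ × ℤ)} :=
      Equiv.subtypeEquivRight (fun w => by
        constructor
        · intro h; exact congrArg Subtype.val h
        · intro h; exact Subtype.ext h)
    have e2 : {w : α // w.1 (Fin.last n) = (s : ℤ × ℤ)}
        ≃ {w : Fin (n+1) → ℤ × ℤ // (Good w ∧ pos w (n+1) = p) ∧ w (Fin.last n) = (s : ℤ × ℤ)} :=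
      Equiv.subtypeSubtypeEquivSubtypeInter (fun w : Fin (n+1) → ℤ × ℤ => Good w ∧ pos w (n+1) = p) (fun w => w (Fin.last n) = (s : ℤ × ℤ))
    have e3 : {w : Fin (n+1) → ℤ × ℤ // (Good w ∧ pos w (n+1) = p) ∧ w (Fin.last n) = (s : ℤ × ℤ)}
        ≃ {w' : Fin n → ℤ × ℤ // Good w' ∧ pos w' n = p - (s : ℤ × ℤ)} := by
      refine ⟨fun x => ⟨Fin.init x.1, good_init x.2.1.1, ?_⟩,
              fun y => ⟨Fin.snoc y.1 (s : ℤ × ℤ),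
                ⟨good_snoc s.2 y.2.1 y.2.2 hp, pos_snoc_end y.1 _ p y.2.2⟩, Fin.snoc_last _ _⟩,
              ?_, ?_⟩
      · rw [pos_init_eq x.1 x.2.1.2, x.2.2]
      · rintro ⟨w, hw⟩
        apply Subtype.ext
        show Fin.snoc (Fin.init w) (s : ℤ × ℤ) = w
        rw [← hw.2]
        exact Fin.snoc_init_self w
      · rintro ⟨w', hw'⟩
        apply Subtype.ext
        exact @Fin.init_snoc n (fun _ => ℤ × ℤ) (s : ℤ × ℤ) w'
    exact (e1.trans e2).trans e3
  rw [h1]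
  calc ∑ s : ↥SF, Nat.card {w : α // f w = s}
      = ∑ s : ↥SF, wc n (p - (s : ℤ × ℤ)) := Finset.sum_congr rfl (fun s _ => h2 s)
    _ = ∑ s ∈ SF, wc n (p - s) := Finset.sum_coe_sort SF (fun s => wc n (p - s))

lemma pos_parity {n : ℕ} (w : Fin n → ℤ × ℤ) (hw : IsWalk w) (a : ℕ) (ha : a ≤ n) :
    ∃ t : ℕ, t ≤ a ∧ (pos w a).1 + (pos w a).2 = 2*(t:ℤ) - a := by
  induction a with
  | zero => exact ⟨0, le_rfl, by rw [pos_zero]; simp⟩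
  | succ a ih =>
    obtain ⟨t, ht, hpar⟩ := ih (by omega)
    have hs := hw ⟨a, by omega⟩
    rw [pos_succ w a (by omega)]
    rcases hs with h | h | h | h <;> rw [h] <;> simp only [Prod.fst_add, Prod.snd_add]
    · exact ⟨t+1, by omega, by push_cast; omega⟩
    · exact ⟨t, by omega, by push_cast; omega⟩
    · exact ⟨t+1, by omega, by push_cast; omega⟩
    · exact ⟨t, by omega, by push_cast; omega⟩

def Tset (n : ℕ) : Finset (ℕ × ℕ) :=
  ((Finset.range (n+1)) ×ˢ (Finset.range (n+1))).filter (fun q => n ≤ 2*q.1 ∧ q.1 ≤ q.2)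

def φ (n : ℕ) (q : ℕ × ℕ) : ℤ × ℤ := ((q.1 : ℤ) + q.2 - n, (q.2 : ℤ) - q.1)

def ψ (n : ℕ) (p : ℤ × ℤ) : ℕ × ℕ :=
  (((n : ℤ) + p.1 - p.2).toNat / 2, (((n : ℤ) + p.1 + p.2).toNat / 2))

lemma total_eq_sum (n : ℕ) :
    Nat.card {w : Fin n → ℤ × ℤ // Good w} = ∑ q ∈ Tset n, wc n (φ n q) := by
  classical
  haveI : Fintype {w : Fin n → ℤ × ℤ // Good w} := by
    have := good_finite n (fun _ => True)
    have h2 : {w : Fin n → ℤ × ℤ | Good w ∧ True} = {w | Good w} := by simp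
    rw [h2] at this
    exact this.fintype
  have hmem : ∀ w : {w : Fin n → ℤ × ℤ // Good w}, ψ n (pos w.1 n) ∈ Tset n := by
    rintro ⟨w, hgood, hval⟩
    obtain ⟨t, ht, hpar⟩ := pos_parity w hgood n le_rfl
    obtain ⟨h1, h2⟩ := hval n le_rfl
    unfold ψ Tset
    simp only [Finset.mem_filter, Finset.mem_product, Finset.mem_range]
    omega
  let g : {w : Fin n → ℤ × ℤ // Good w} → ↥(Tset n) := fun w => ⟨ψ n (pos w.1 n), hmem w⟩
  have h1 : Nat.card {w : Fin n → ℤ × ℤ // Good w} = ∑ q : ↥(Tset n), Nat.card {w // g w = q} := by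
    rw [← Nat.card_congr (Equiv.sigmaFiberEquiv g)]
    exact card_sigma' _
  have h2 : ∀ q : ↥(Tset n), Nat.card {w // g w = q} = wc n (φ n (q : ℕ × ℕ)) := by
    intro q
    apply Nat.card_congr
    have e1 : {w // g w = q} ≃ {w : {w : Fin n → ℤ × ℤ // Good w} // ψ n (pos w.1 n) = (q : ℕ × ℕ)} :=
      Equiv.subtypeEquivRight (fun w => by
        constructor
        · intro h; exact congrArg Subtype.val h
        · intro h; exact Subtype.ext h)
    have e2 : {w : {w : Fin n → ℤ × ℤ // Good w} // ψ n (pos w.1 n) = (q : ℕ × ℕ)}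
        ≃ {w : Fin n → ℤ × ℤ // Good w ∧ ψ n (pos w n) = (q : ℕ × ℕ)} :=
      Equiv.subtypeSubtypeEquivSubtypeInter (fun w : Fin n → ℤ × ℤ => Good w)
        (fun w => ψ n (pos w n) = (q : ℕ × ℕ))
    have e3 : {w : Fin n → ℤ × ℤ // Good w ∧ ψ n (pos w n) = (q : ℕ × ℕ)}
        ≃ {w : Fin n → ℤ × ℤ // Good w ∧ pos w n = φ n (q : ℕ × ℕ)} := by
      apply Equiv.subtypeEquiv (Equiv.refl _)
      intro w
      simp only [Equiv.refl_apply]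
      constructor
      · rintro ⟨hgood, hpsi⟩
        refine ⟨hgood, ?_⟩
        obtain ⟨t, ht, hpar⟩ := pos_parity w hgood.1 n le_rfl
        obtain ⟨hv1, hv2⟩ := hgood.2 n le_rfl
        have hq := q.2
        unfold Tset at hq
        simp only [Finset.mem_filter, Finset.mem_product, Finset.mem_range] at hq
        unfold ψ at hpsi
        rw [Prod.ext_iff] at hpsi
        simp only at hpsi
        unfold φ
        rw [Prod.ext_iff]
        constructor <;> simp only [] <;> omega
      · rintro ⟨hgood, hpos⟩
        refine ⟨hgood, ?_⟩
        obtain ⟨t, ht, hpar⟩ := pos_parity w hgood.1 n le_rfl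
        have hq := q.2
        unfold Tset at hq
        simp only [Finset.mem_filter, Finset.mem_product, Finset.mem_range] at hq
        rw [hpos]
        unfold ψ φ
        rw [Prod.ext_iff]
        unfold φ at hpos
        rw [Prod.ext_iff] at hpos
        simp only [] at hpos ⊢
        rw [hpos.1, hpos.2] at hpar
        constructor <;> omega
    exact (e1.trans e2).trans e3
  rw [h1]
  calc ∑ q : ↥(Tset n), Nat.card {w // g w = q}
      = ∑ q : ↥(Tset n), wc n (φ n (q : ℕ × ℕ)) := Finset.sum_congr rfl (fun q _ => h2 q)
    _ = ∑ q ∈ Tset n, wc n (φ n q) := Finset.sum_coe_sort (Tset n) (fun q => wc n (φ n q))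

lemma bn_zero_eval (t : ℤ) : bn 0 t = if t = 0 then 1 else 0 := by
  unfold bn
  split_ifs with h1 h2 h2 <;> try omega
  · have : t = 0 := by omega
    subst this; rfl

lemma sum_SF {M : Type*} [AddCommMonoid M] (F : ℤ × ℤ → M) :
    ∑ s ∈ SF, F s = F (0,1) + (F (0,-1) + (F (1,0) + F (-1,0))) := by
  unfold SF
  rw [Finset.sum_insert (by decide), Finset.sum_insert (by decide),
    Finset.sum_insert (by decide), Finset.sum_singleton]

lemma wc_eq_Dd : ∀ (n : ℕ) (tA tB : ℤ), (n:ℤ) ≤ 2*tA → tA ≤ tB →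
    (wc n (tA + tB - n, tB - tA) : ℤ) = Dd n tA tB := by
  intro n
  induction n with
  | zero =>
    intro tA tB h1 h2
    have htA : 0 ≤ tA := by omega
    rw [wc_zero]
    unfold Dd
    rw [bn_zero_eval tA, bn_zero_eval (tA+1), bn_zero_eval (tA-1), bn_zero_eval (tA+2),
      bn_zero_eval tB, bn_zero_eval (tB+1), bn_zero_eval (tB+2), bn_zero_eval (tB+3)]
    push_cast
    rcases eq_or_ne ((tA + tB - 0 : ℤ), (tB - tA : ℤ)) 0 with hc | hc
    · rw [if_pos hc]
      rw [Prod.ext_iff] at hc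
      simp only [Prod.fst_zero, Prod.snd_zero] at hc
      obtain ⟨hc1, hc2⟩ := hc
      split_ifs <;> omega
    · rw [if_neg hc]
      have hc' : ¬ (tA = 0 ∧ tB = 0) := by
        rintro ⟨hh1, hh2⟩
        apply hc
        rw [hh1, hh2]
        rfl
      split_ifs <;> omega
  | succ n ih =>
    intro tA tB h1 h2
    push_cast at h1 ⊢
    have hp : Valid (tA + tB - ((n:ℤ)+1), tB - tA) := by
      constructor
      · show tB - tA ≤ tA + tB - ((n:ℤ)+1); omega
      · show (0:ℤ) ≤ tB - tA; omega
    rw [wc_succ n _ hp, sum_SF (fun s => wc n ((tA + tB - ((n:ℤ)+1), tB - tA) - s))]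
    have a1 : (tA + tB - ((n:ℤ)+1), tB - tA) - ((0:ℤ),(1:ℤ)) = (tA + (tB-1) - n, (tB-1) - tA) := by
      rw [Prod.mk_sub_mk]; exact Prod.ext_iff.mpr ⟨by ring, by ring⟩
    have a2 : (tA + tB - ((n:ℤ)+1), tB - tA) - ((0:ℤ),(-1:ℤ)) = ((tA-1) + tB - n, tB - (tA-1)) := by
      rw [Prod.mk_sub_mk]; exact Prod.ext_iff.mpr ⟨by ring, by ring⟩
    have a3 : (tA + tB - ((n:ℤ)+1), tB - tA) - ((1:ℤ),(0:ℤ)) = ((tA-1) + (tB-1) - n, (tB-1) - (tA-1)) := by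
      rw [Prod.mk_sub_mk]; exact Prod.ext_iff.mpr ⟨by ring, by ring⟩
    have a4 : (tA + tB - ((n:ℤ)+1), tB - tA) - ((-1:ℤ),(0:ℤ)) = (tA + tB - n, tB - tA) := by
      rw [Prod.mk_sub_mk]; exact Prod.ext_iff.mpr ⟨by ring, by ring⟩
    rw [a1, a2, a3, a4]
    have T1 : (wc n (tA + (tB-1) - n, (tB-1) - tA) : ℤ) = Dd n tA (tB-1) := by
      by_cases hc : tA ≤ tB - 1
      · exact ih tA (tB-1) (by omega) hc
      · have hEq : tB = tA := by omega
        subst hEq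
        rw [wc_invalid n _ (by unfold Valid; simp only []; omega), Dd_wall2]
        simp
    have T2 : (wc n ((tA-1) + tB - n, tB - (tA-1)) : ℤ) = Dd n (tA-1) tB := by
      by_cases hc : (n:ℤ) ≤ 2*(tA-1)
      · exact ih (tA-1) tB hc (by omega)
      · rw [wc_invalid n _ (by unfold Valid; simp only []; omega), Dd_wall1 n _ _ (by omega)]
        simp
    have T3 : (wc n ((tA-1) + (tB-1) - n, (tB-1) - (tA-1)) : ℤ) = Dd n (tA-1) (tB-1) := by
      by_cases hc : (n:ℤ) ≤ 2*(tA-1)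
      · exact ih (tA-1) (tB-1) hc (by omega)
      · rw [wc_invalid n _ (by unfold Valid; simp only []; omega), Dd_wall1 n _ _ (by omega)]
        simp
    have T4 : (wc n (tA + tB - n, tB - tA) : ℤ) = Dd n tA tB := ih tA tB (by omega) h2
    push_cast
    rw [T1, T2, T3, T4, Dd_rec]
    ring

noncomputable def Phi (n h : ℕ) (t : ℕ) : ℤ :=
  bn n (h:ℤ) * (bn n (t:ℤ) + bn n ((t:ℤ)+1) + bn n ((t:ℤ)+2))
    - (bn n ((h:ℤ)-1) + bn n (h:ℤ) + bn n ((h:ℤ)+1)) * bn n ((t:ℤ)+1)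
    - bn n (t:ℤ) * bn n ((t:ℤ)+2) + bn n ((t:ℤ)+1)^2

lemma teleF (F : ℕ → ℤ) : ∀ (b : ℕ) (a : ℕ), a ≤ b + 1 →
    ∑ t ∈ Finset.Icc a b, (F t - F (t+1)) = F a - F (b+1) := by
  intro b
  induction b with
  | zero =>
    intro a ha
    interval_cases a
    · simp
    · rw [Finset.Icc_eq_empty (by omega)]
      simp
  | succ b ih =>
    intro a ha
    rcases Nat.lt_or_ge a (b+2) with hlt | hge
    · have h1 : a ≤ b + 1 := by omega
      rw [Finset.sum_Icc_succ_top h1, ih a h1]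
      ring
    · have : a = b + 2 := by omega
      subst this
      rw [Finset.Icc_eq_empty (by omega)]
      simp

lemma inner_sum (n h tB : ℕ) (htB : h ≤ tB) :
    ∑ tA ∈ Finset.Icc h tB, Dd n (tA:ℤ) (tB:ℤ) = Phi n h tB - Phi n h (tB+1) := by
  have hsummand : ∀ tA ∈ Finset.Icc h tB, Dd n (tA:ℤ) (tB:ℤ)
      = (bn n (tB:ℤ) - bn n ((tB:ℤ)+3)) * ((fun t : ℕ => bn n (t:ℤ)) tA - (fun t : ℕ => bn n (t:ℤ)) (tA+1))
        - (bn n ((tB:ℤ)+1) - bn n ((tB:ℤ)+2)) *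
          (((fun t : ℕ => bn n ((t:ℤ)-1)) tA - (fun t : ℕ => bn n ((t:ℤ)-1)) (tA+1))
            + ((fun t : ℕ => bn n (t:ℤ)) tA - (fun t : ℕ => bn n (t:ℤ)) (tA+1))
            + ((fun t : ℕ => bn n ((t:ℤ)+1)) tA - (fun t : ℕ => bn n ((t:ℤ)+1)) (tA+1))) := by
    intro tA _
    unfold Dd
    push_cast
    ring_nf
  rw [Finset.sum_congr rfl hsummand, Finset.sum_sub_distrib, ← Finset.mul_sum, ← Finset.mul_sum,
    Finset.sum_add_distrib, Finset.sum_add_distrib,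
    teleF _ tB h (by omega), teleF _ tB h (by omega), teleF _ tB h (by omega)]
  unfold Phi
  push_cast
  ring_nf

lemma total_Dd (n : ℕ) :
    ∑ q ∈ Tset n, Dd n (q.1:ℤ) (q.2:ℤ)
      = bn n (((n+1)/2 : ℕ) : ℤ)^2
        - bn n ((((n+1)/2 : ℕ) : ℤ) - 1) * bn n ((((n+1)/2 : ℕ) : ℤ) + 1) := by
  set h : ℕ := (n+1)/2 with hh
  unfold Tset
  rw [Finset.sum_filter, Finset.sum_product]
  dsimp only
  rw [Finset.sum_comm]
  have hinner : ∀ tB ∈ Finset.range (n+1),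
      (∑ tA ∈ Finset.range (n+1), if n ≤ 2*tA ∧ tA ≤ tB then Dd n (tA:ℤ) (tB:ℤ) else 0)
        = ∑ tA ∈ Finset.Icc h tB, Dd n (tA:ℤ) (tB:ℤ) := by
    intro tB htB
    rw [Finset.mem_range] at htB
    rw [← Finset.sum_filter]
    congr 1
    ext tA
    simp only [Finset.mem_filter, Finset.mem_range, Finset.mem_Icc]
    omega
  rw [Finset.sum_congr rfl hinner]
  have hsub : ∑ tB ∈ Finset.range (n+1), (∑ tA ∈ Finset.Icc h tB, Dd n (tA:ℤ) (tB:ℤ))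
      = ∑ tB ∈ Finset.Icc h n, (∑ tA ∈ Finset.Icc h tB, Dd n (tA:ℤ) (tB:ℤ)) := by
    refine (Finset.sum_subset ?_ ?_).symm
    · intro tB htB
      rw [Finset.mem_Icc] at htB
      rw [Finset.mem_range]
      omega
    · intro tB htB hnot
      rw [Finset.mem_range] at htB
      rw [Finset.mem_Icc] at hnot
      rw [Finset.Icc_eq_empty (by omega)]
      rfl
  rw [hsub]
  have hPhi : ∀ tB ∈ Finset.Icc h n, (∑ tA ∈ Finset.Icc h tB, Dd n (tA:ℤ) (tB:ℤ))
      = Phi n h tB - Phi n h (tB+1) := by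
    intro tB htB
    rw [Finset.mem_Icc] at htB
    exact inner_sum n h tB htB.1
  rw [Finset.sum_congr rfl hPhi, teleF (Phi n h) n h (by omega)]
  have z1 : bn n (((n+1:ℕ)):ℤ) = 0 := bn_zero_of_gt _ _ (by push_cast; omega)
  have z2 : bn n (((n+1:ℕ)):ℤ)*0 = 0 := by rw [z1]; ring
  have hPhiTop : Phi n h (n+1) = 0 := by
    unfold Phi
    have e1 : bn n (((n+1:ℕ)):ℤ) = 0 := z1
    have e2 : bn n ((((n+1:ℕ)):ℤ)+1) = 0 := bn_zero_of_gt _ _ (by push_cast; omega)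
    have e3 : bn n ((((n+1:ℕ)):ℤ)+2) = 0 := bn_zero_of_gt _ _ (by push_cast; omega)
    rw [e1, e2, e3]
    ring
  rw [hPhiTop]
  unfold Phi
  ring

lemma wc_cast_Dd (n : ℕ) (q : ℕ × ℕ) (hq : q ∈ Tset n) :
    (wc n (φ n q) : ℤ) = Dd n (q.1:ℤ) (q.2:ℤ) := by
  unfold Tset at hq
  simp only [Finset.mem_filter, Finset.mem_product, Finset.mem_range] at hq
  have h1 : (n:ℤ) ≤ 2*(q.1:ℤ) := by push_cast; omega
  have h2 : (q.1:ℤ) ≤ (q.2:ℤ) := by push_cast; omega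
  have := wc_eq_Dd n (q.1:ℤ) (q.2:ℤ) h1 h2
  rw [← this]
  rfl

lemma total_closed (n : ℕ) :
    (Nat.card {w : Fin n → ℤ × ℤ // Good w} : ℤ)
      = bn n (((n+1)/2 : ℕ) : ℤ)^2
        - bn n ((((n+1)/2 : ℕ) : ℤ) - 1) * bn n ((((n+1)/2 : ℕ) : ℤ) + 1) := by
  rw [total_eq_sum n, Nat.cast_sum,
    Finset.sum_congr rfl (fun q hq => wc_cast_Dd n q hq), total_Dd n]

lemma bn_eval (n k : ℕ) (hk : k ≤ n) : bn n (k:ℤ) = ((n.choose k : ℕ) : ℤ) := by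
  unfold bn
  rw [if_pos (by constructor <;> omega)]
  simp

lemma even_id (m : ℕ) :
    bn (2*m) (((2*m+1)/2 : ℕ) : ℤ)^2
      - bn (2*m) ((((2*m+1)/2 : ℕ) : ℤ) - 1) * bn (2*m) ((((2*m+1)/2 : ℕ) : ℤ) + 1)
      = (2*(m:ℤ)+1) * (catalan m : ℤ)^2 := by
  have hh : (2*m+1)/2 = m := by omega
  rw [hh]
  rcases Nat.eq_zero_or_pos m with hm | hm
  · subst hm
    norm_num
    unfold bn
    norm_num
  · -- m ≥ 1
    have e1 : bn (2*m) ((m:ℕ):ℤ) = (((2*m).choose m : ℕ) : ℤ) := bn_eval (2*m) m (by omega)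
    have e2 : ((m:ℤ) - 1) = (((m-1 : ℕ)) : ℤ) := by omega
    have e3 : ((m:ℤ) + 1) = (((m+1 : ℕ)) : ℤ) := by omega
    rw [e1, e2, e3, bn_eval (2*m) (m-1) (by omega), bn_eval (2*m) (m+1) (by omega)]
    have hsym : (((2*m).choose (m-1) : ℕ) : ℤ) = (((2*m).choose (m+1) : ℕ) : ℤ) := by
      congr 1
      have := Nat.choose_symm (show m+1 ≤ 2*m by omega)
      rw [show 2*m - (m+1) = m - 1 by omega] at this
      omega
    rw [hsym]
    have key1 : (((2*m).choose (m+1) : ℕ) : ℤ) * ((m:ℤ)+1) = (((2*m).choose m : ℕ) : ℤ) * m := by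
      have := Nat.choose_succ_right_eq (2*m) m
      rw [show 2*m - m = m by omega] at this
      exact_mod_cast this
    have key2 : ((m:ℤ)+1) * ((catalan m : ℕ) : ℤ) = (((2*m).choose m : ℕ) : ℤ) := by
      have := succ_mul_catalan_eq_centralBinom m
      rw [Nat.centralBinom] at this
      exact_mod_cast this
    set a : ℤ := (((2*m).choose m : ℕ) : ℤ) with ha
    set b : ℤ := (((2*m).choose (m+1) : ℕ) : ℤ) with hb
    set c : ℤ := ((catalan m : ℕ) : ℤ) with hc
    have hne : ((m:ℤ)+1)^2 ≠ 0 := by positivity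
    apply mul_left_cancel₀ hne
    linear_combination (-(((m:ℤ)+1)*b + (m:ℤ)*a)) * key1 + (-(2*(m:ℤ)+1)*(((m:ℤ)+1)*c + a)) * key2

lemma odd_id (m : ℕ) :
    bn (2*m+1) (((2*m+2)/2 : ℕ) : ℤ)^2
      - bn (2*m+1) ((((2*m+2)/2 : ℕ) : ℤ) - 1) * bn (2*m+1) ((((2*m+2)/2 : ℕ) : ℤ) + 1)
      = (2*(m:ℤ)+1) * (catalan m : ℤ) * (catalan (m+1) : ℤ) := by
  have hh : (2*m+2)/2 = m+1 := by omega
  rw [hh]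
  rcases Nat.eq_zero_or_pos m with hm | hm
  · subst hm
    norm_num
    unfold bn
    norm_num [catalan_one]
  · have e1 : bn (2*m+1) (((m+1:ℕ)):ℤ) = (((2*m+1).choose (m+1) : ℕ) : ℤ) :=
      bn_eval (2*m+1) (m+1) (by omega)
    have e2 : (((m+1:ℕ):ℤ) - 1) = ((m : ℕ) : ℤ) := by omega
    have e3 : (((m+1:ℕ):ℤ) + 1) = (((m+2 : ℕ)) : ℤ) := by omega
    rw [e1, e2, e3, bn_eval (2*m+1) m (by omega), bn_eval (2*m+1) (m+2) (by omega)]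
    have hsym : (((2*m+1).choose m : ℕ) : ℤ) = (((2*m+1).choose (m+1) : ℕ) : ℤ) := by
      congr 1
      have := Nat.choose_symm (show m+1 ≤ 2*m+1 by omega)
      rw [show 2*m+1 - (m+1) = m by omega] at this
      omega
    rw [hsym]
    have key1 : ((m:ℤ)+2) * (((2*m+1).choose (m+2) : ℕ) : ℤ) = (m:ℤ) * (((2*m+1).choose (m+1) : ℕ) : ℤ) := by
      have := Nat.choose_succ_right_eq (2*m+1) (m+1)
      rw [show 2*m+1 - (m+1) = m by omega] at this
      have h := congrArg (fun x : ℕ => (x : ℤ)) this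
      push_cast at h
      linarith [h]
    have key2 : (((2*m+1).choose (m+1) : ℕ) : ℤ) * ((m:ℤ)+1) = (2*(m:ℤ)+1) * (((2*m).choose m : ℕ) : ℤ) := by
      have := Nat.add_one_mul_choose_eq (2*m) m
      have h := congrArg (fun x : ℕ => (x : ℤ)) this
      push_cast [Nat.succ_eq_add_one] at h
      linarith [h]
    have key3 : ((m:ℤ)+1) * ((catalan m : ℕ) : ℤ) = (((2*m).choose m : ℕ) : ℤ) := by
      have := succ_mul_catalan_eq_centralBinom m
      rw [Nat.centralBinom] at this
      exact_mod_cast this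
    have key4 : ((m:ℤ)+2) * ((catalan (m+1) : ℕ) : ℤ) = 2 * (((2*m+1).choose (m+1) : ℕ) : ℤ) := by
      have h1 := succ_mul_catalan_eq_centralBinom (m+1)
      rw [Nat.centralBinom] at h1
      have h2 : (2*(m+1)).choose (m+1) = (2*m+1).choose m + (2*m+1).choose (m+1) := by
        rw [show 2*(m+1) = (2*m+1)+1 by omega]
        exact Nat.choose_succ_succ (2*m+1) m
      rw [h2] at h1
      have h3 : (2*m+1).choose m = (2*m+1).choose (m+1) := by
        have := Nat.choose_symm (show m+1 ≤ 2*m+1 by omega)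
        rw [show 2*m+1 - (m+1) = m by omega] at this
        omega
      rw [h3] at h1
      have h := congrArg (fun x : ℕ => (x : ℤ)) h1
      push_cast at h
      linarith [h]
    set A : ℤ := (((2*m+1).choose (m+1) : ℕ) : ℤ) with hA
    set D : ℤ := (((2*m+1).choose (m+2) : ℕ) : ℤ) with hD
    set B : ℤ := (((2*m).choose m : ℕ) : ℤ) with hB
    set c : ℤ := ((catalan m : ℕ) : ℤ) with hc
    set e : ℤ := ((catalan (m+1) : ℕ) : ℤ) with he
    have hne : ((m:ℤ)+1)*((m:ℤ)+2) ≠ 0 := by positivity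
    apply mul_left_cancel₀ hne
    linear_combination (-((m:ℤ)+1)*A) * key1 + (2*A) * key2 + (-2*(2*(m:ℤ)+1)*A) * key3
      + (-(2*(m:ℤ)+1)*((m:ℤ)+1)*c) * key4

lemma even_final (m : ℕ) :
    Nat.card {w : Fin (2*m) → ℤ × ℤ // Good w} = (2*m+1) * catalan m ^ 2 := by
  have h1 : (Nat.card {w : Fin (2*m) → ℤ × ℤ // Good w} : ℤ)
      = (((2*m+1) * catalan m ^ 2 : ℕ) : ℤ) := by
    rw [total_closed (2*m), even_id m]
    push_cast
    ring
  exact_mod_cast h1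

lemma odd_final (m : ℕ) :
    Nat.card {w : Fin (2*m+1) → ℤ × ℤ // Good w} = (2*m+1) * catalan m * catalan (m+1) := by
  have h1 : (Nat.card {w : Fin (2*m+1) → ℤ × ℤ // Good w} : ℤ)
      = (((2*m+1) * catalan m * catalan (m+1) : ℕ) : ℤ) := by
    rw [total_closed (2*m+1)]
    rw [show (2*m+1)+1 = 2*m+2 by omega]
    rw [odd_id m]
    push_cast
    ring
  exact_mod_cast h1

end Oct

theorem stmt14 (m : ℕ) :
    Nat.card {w : Fin (2 * m) → ℤ × ℤ //
      IsWalk w ∧ (∀ a ≤ 2 * m, (pos w a).2 ≤ (pos w a).1 ∧ 0 ≤ (pos w a).2)} = (2 * m + 1) * catalan m ^ 2 ∧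
    Nat.card {w : Fin (2 * m + 1) → ℤ × ℤ //
      IsWalk w ∧ (∀ a ≤ 2 * m + 1, (pos w a).2 ≤ (pos w a).1 ∧ 0 ≤ (pos w a).2)} =
      (2 * m + 1) * catalan m * catalan (m + 1) := by
  constructor
  · exact Oct.even_final m
  · exact Oct.odd_final m
end

section
/- For every n ≥ 0, the number of walks of length n constrained to the upper half-plane (all positions satisfy y ≥ 0) that end at the point (δ_n, 0), where δ_n is the remainder of n modulo 2, equals the sum over l = 0, 1, …, ⌊n/2⌋ of (1/(l+1)) · n! / (l! · l! · (⌊n/2⌋ − l)! · (⌈n/2⌉ − l)!). -/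
/-!
Record a walk by the set `s` of positions of its vertical steps (N, S) and the sign of every
step. The height changes only at the vertical steps, so the walk stays in the upper half-plane
and returns to height `0` iff its vertical steps, read in order, form a Dyck path; the
horizontal steps (E, W) merely have to sum to `n % 2`. Hence a set `s` of size `2 l` carries
`catalan l * choose (n - 2 l) (⌈n/2⌉ - l)` walks, and summing over the `choose n (2 l)` such
sets gives the formula.
-/

open Finset

namespace HalfPlaneWalk

def unitStep (b : Bool) : ℤ := if b then 1 else -1

section Excursion

theorem sum_subtype_filter_eq_sum_filter {ι : Type*} [Fintype ι] (s : Finset ι) (q : ι → Prop)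
    [DecidablePred q] {f : ι → ℤ} (hf : ∀ i ∉ s, f i = 0) :
    ∑ i ∈ univ.filter (fun i : s => q i), f i = ∑ j with q j, f j := by
  rw [Finset.sum_filter, Finset.sum_filter,
    Finset.sum_coe_sort s (fun j => if q j then f j else 0)]
  exact Finset.sum_subset (subset_univ s) fun j _ hj => by simp [hf j hj]

variable {ι κ : Type*} [Fintype ι] [LinearOrder ι] [Fintype κ] [LinearOrder κ]

def IsExcursion (f : ι → ℤ) : Prop :=
  (∀ t, 0 ≤ ∑ j with j < t, f j) ∧ ∑ j, f j = 0

theorem isExcursion_comp_orderIso (e : ι ≃o κ) (f : κ → ℤ) :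
    IsExcursion (f ∘ e) ↔ IsExcursion f := by
  have hprefix (t : ι) : ∑ j with j < t, f (e j) = ∑ k with k < e t, f k :=
    Finset.sum_equiv e.toEquiv (by simp) (by simp)
  have htotal : ∑ j, f (e j) = ∑ k, f k := e.toEquiv.sum_comp f
  simp only [IsExcursion, Function.comp_apply, hprefix, htotal]
  rw [e.surjective.forall]

theorem isExcursion_subtype_iff (s : Finset ι) {f : ι → ℤ} (hf : ∀ i ∉ s, f i = 0) :
    IsExcursion (fun i : s => f i) ↔ IsExcursion f := by
  have htotal : ∑ i : s, f i = ∑ j, f j := by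
    simpa using sum_subtype_filter_eq_sum_filter s (fun _ => True) hf
  have hprefix (t : s) : ∑ i with i < t, f i = ∑ j with j < (t : ι), f j := by
    simpa only [← Subtype.coe_lt_coe] using sum_subtype_filter_eq_sum_filter s (· < (t : ι)) hf
  simp only [IsExcursion, htotal, hprefix]
  refine ⟨fun ⟨hpos, hzero⟩ => ⟨fun t => ?_, hzero⟩,
    fun ⟨hpos, hzero⟩ => ⟨fun t => hpos t, hzero⟩⟩
  -- The prefix sum before `t` equals the one before the first element `t'` of `s` with
  -- `t ≤ t'`, or the total sum if there is none.
  by_cases hnext : (s.filter (fun x => t ≤ x)).Nonempty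
  · set t' := (s.filter (fun x => t ≤ x)).min' hnext
    have ht' : t' ∈ s.filter (fun x => t ≤ x) := min'_mem _ hnext
    rw [mem_filter] at ht'
    suffices ∑ j with j < t, f j = ∑ j with j < t', f j from this ▸ hpos ⟨t', ht'.1⟩
    refine Finset.sum_subset (fun j => by simpa using (lt_of_lt_of_le · ht'.2)) fun j hj hjt => ?_
    refine hf j fun hjs => ?_
    simp only [mem_filter, mem_univ, true_and, not_lt] at hj hjt
    exact absurd (min'_le _ j (mem_filter.2 ⟨hjs, hjt⟩)) (not_le.2 hj)
  · rw [← hzero]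
    refine (Finset.sum_subset (filter_subset (· < t) univ) fun j _ hj =>
      hf j fun hjs => hnext ?_).ge
    exact ⟨j, mem_filter.2 ⟨hjs, by simpa using hj⟩⟩

theorem card_isExcursion_congr (e : ι ≃o κ) :
    Nat.card {σ : κ → Bool // IsExcursion (unitStep ∘ σ)} =
      Nat.card {σ : ι → Bool // IsExcursion (unitStep ∘ σ)} :=
  Nat.card_congr <| (e.symm.toEquiv.arrowCongr (Equiv.refl Bool)).subtypeEquiv fun σ =>
    (isExcursion_comp_orderIso e (unitStep ∘ σ)).symm

end Excursion

theorem filter_val_lt_eq_univ {n a : ℕ} (ha : n ≤ a) :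
    univ.filter (fun l : Fin n => (l : ℕ) < a) = univ :=
  filter_true_of_mem fun l _ => lt_of_lt_of_le l.isLt ha

theorem isExcursion_fin_iff {n : ℕ} (f : Fin n → ℤ) :
    IsExcursion f ↔
      (∀ a ≤ n, 0 ≤ ∑ l ∈ univ.filter (fun l : Fin n => (l : ℕ) < a), f l) ∧ ∑ l, f l = 0 := by
  refine ⟨fun ⟨hpos, hzero⟩ => ⟨fun a ha => ?_, hzero⟩,
    fun ⟨hpos, hzero⟩ => ⟨fun t => ?_, hzero⟩⟩
  · rcases ha.lt_or_eq with ha | rfl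
    · simpa [Fin.lt_def] using hpos ⟨a, ha⟩
    · exact (filter_val_lt_eq_univ le_rfl).symm ▸ hzero.ge
  · have := hpos t t.isLt.le
    simp only [← Fin.lt_def] at this
    exact this

def toDyckStep (b : Bool) : DyckStep := if b then .U else .D

theorem toDyckStep_injective : Function.Injective toDyckStep := by
  decide

def heightChange : DyckStep → ℤ
  | .U => 1
  | .D => -1

theorem count_U_sub_count_D (L : List DyckStep) :
    (L.count .U : ℤ) - L.count .D = (L.map heightChange).sum := by
  induction L with
  | nil => simp
  | cons x L ih => cases x <;> simp [heightChange, ← ih] <;> ring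

theorem count_U_sub_count_D_take_ofFn {m : ℕ} (σ : Fin m → Bool) (i : ℕ) :
    (((List.ofFn (toDyckStep ∘ σ)).take i).count .U : ℤ) -
        ((List.ofFn (toDyckStep ∘ σ)).take i).count .D =
      ∑ c ∈ univ.filter (fun c : Fin m => (c : ℕ) < i), unitStep (σ c) := by
  rw [count_U_sub_count_D, List.map_take, List.map_ofFn, List.sum_take_ofFn]
  refine sum_congr rfl fun c _ => ?_
  simp only [Function.comp_apply]
  cases σ c <;> rfl

def IsDyck (L : List DyckStep) : Prop :=
  L.count .U = L.count .D ∧ ∀ i, (L.take i).count .D ≤ (L.take i).count .U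

theorem isDyck_ofFn_iff {m : ℕ} (σ : Fin m → Bool) :
    IsDyck (List.ofFn (toDyckStep ∘ σ)) ↔ IsExcursion (unitStep ∘ σ) := by
  have htake (i : ℕ) (hi : m ≤ i) :
      (List.ofFn (toDyckStep ∘ σ)).take i = List.ofFn (toDyckStep ∘ σ) :=
    List.take_of_length_le (by simpa using hi)
  have hsum := count_U_sub_count_D_take_ofFn σ
  have htotal : ((List.ofFn (toDyckStep ∘ σ)).count .U : ℤ) -
      (List.ofFn (toDyckStep ∘ σ)).count .D = ∑ c, unitStep (σ c) := by
    rw [← htake m le_rfl, hsum, filter_val_lt_eq_univ le_rfl]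
  rw [isExcursion_fin_iff, IsDyck]
  simp only [Function.comp_apply, ← hsum, ← htotal, sub_nonneg, sub_eq_zero, Nat.cast_le,
    Nat.cast_inj]
  refine ⟨fun ⟨hbalanced, hprefix⟩ => ⟨fun a _ => hprefix a, hbalanced⟩,
    fun ⟨hprefix, hbalanced⟩ => ⟨hbalanced, fun i => ?_⟩⟩
  rcases le_total i m with hi | hi
  · exact hprefix i hi
  · rw [htake i hi]
    exact hbalanced.ge

theorem card_isExcursion_eq_card_dyckWord (m : ℕ) :
    Nat.card {σ : Fin m → Bool // IsExcursion (unitStep ∘ σ)} =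
      Nat.card {p : DyckWord // p.toList.length = m} := by
  refine Nat.card_eq_of_bijective (fun σ => ⟨⟨List.ofFn (toDyckStep ∘ σ.1),
    ((isDyck_ofFn_iff σ.1).2 σ.2).1, ((isDyck_ofFn_iff σ.1).2 σ.2).2⟩, List.length_ofFn⟩)
    ⟨fun σ τ h => ?_, fun p => ?_⟩
  · have hfn : toDyckStep ∘ σ.1 = toDyckStep ∘ τ.1 :=
      List.ofFn_injective (congrArg (·.1.toList) h)
    exact Subtype.ext (toDyckStep_injective.comp_left hfn)
  · set σ : Fin m → Bool := fun c => decide (p.1.toList[c.1]'(by simp [p.2]) = .U)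
    have hlist : List.ofFn (toDyckStep ∘ σ) = p.1.toList := by
      refine List.ext_getElem (by simp [p.2]) fun k _ _ => ?_
      simp only [List.getElem_ofFn, Function.comp_apply, σ]
      rcases p.1.toList[k].dichotomy with h | h <;> simp [h, toDyckStep]
    have hdyck : IsDyck (List.ofFn (toDyckStep ∘ σ)) :=
      hlist ▸ ⟨p.1.count_U_eq_count_D, p.1.count_D_le_count_U⟩
    exact ⟨⟨σ, (isDyck_ofFn_iff σ).1 hdyck⟩, Subtype.ext (DyckWord.ext hlist)⟩

theorem card_dyckWord_length (m : ℕ) :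
    Nat.card {p : DyckWord // p.toList.length = m} = if Even m then catalan (m / 2) else 0 := by
  split_ifs with hm
  · obtain ⟨l, rfl⟩ := hm
    rw [Nat.card_congr (Equiv.subtypeEquivRight fun p => by
      rw [← p.two_mul_semilength_eq_length]; omega : _ ≃ {p : DyckWord // p.semilength = l}),
      Nat.card_eq_fintype_card, DyckWord.card_dyckWord_semilength_eq_catalan]
    congr 1
    omega
  · rw [Nat.card_eq_zero]
    refine .inl ⟨fun p => hm ⟨p.1.semilength, ?_⟩⟩
    have := p.1.two_mul_semilength_eq_length
    omega

theorem sum_unitStep {κ : Type*} [Fintype κ] (τ : κ → Bool) :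
    ∑ i, unitStep (τ i) = 2 * #{i | τ i} - Fintype.card κ := by
  have h (b : Bool) : unitStep b = 2 * (if b then 1 else 0) - 1 := by cases b <;> rfl
  simp only [h, ← mul_sum, sum_sub_distrib, sum_boole, sum_const, card_univ]
  simp

theorem card_sum_unitStep_eq {κ : Type*} [Fintype κ] (t : ℤ) {k : ℕ}
    (hk : Fintype.card κ + t = 2 * k) :
    Nat.card {τ : κ → Bool // ∑ i, unitStep (τ i) = t} = (Fintype.card κ).choose k := by
  classical
  let e : {τ : κ → Bool // ∑ i, unitStep (τ i) = t} ≃ {u : Finset κ // #u = k} :=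
    { toFun τ := ⟨univ.filter (τ.1 · = true), by have := sum_unitStep τ.1; omega⟩
      invFun u := ⟨fun i => decide (i ∈ u.1), by rw [sum_unitStep]; simp [u.2]; omega⟩
      left_inv τ := by ext; simp
      right_inv u := by ext; simp }
  rw [Nat.card_congr e, Nat.card_eq_fintype_card, Fintype.card_finset_len]

def step (vertical up : Bool) : ℤ × ℤ :=
  if vertical then (0, unitStep up) else (unitStep up, 0)

theorem step_injective2 : Function.Injective2 step := by
  unfold Function.Injective2
  decide

theorem exists_step_iff (v : ℤ × ℤ) :
    (∃ vertical up, step vertical up = v) ↔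
      v = (0, 1) ∨ v = (0, -1) ∨ v = (1, 0) ∨ v = (-1, 0) := by
  constructor
  · rintro ⟨_ | _, _ | _, rfl⟩ <;> simp [step, unitStep]
  · rintro (rfl | rfl | rfl | rfl)
    exacts [⟨true, true, rfl⟩, ⟨true, false, rfl⟩, ⟨false, true, rfl⟩, ⟨false, false, rfl⟩]

section Walks

variable {n : ℕ}

def walkOf (s : Finset (Fin n)) (u : Fin n → Bool) : Fin n → ℤ × ℤ :=
  fun l => step (decide (l ∈ s)) (u l)

theorem walkOf_injective2 : Function.Injective2 (walkOf (n := n)) := by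
  intro s s' u u' h
  have hl (l : Fin n) := step_injective2 (congrFun h l)
  exact ⟨Finset.ext fun l => by simpa using (hl l).1, funext fun l => (hl l).2⟩

theorem isWalk_iff_exists_walkOf (w : Fin n → ℤ × ℤ) : IsWalk w ↔ ∃ s u, walkOf s u = w := by
  constructor
  · intro hw
    choose vertical up hstep using fun l => (exists_step_iff (w l)).2 (hw l)
    exact ⟨univ.filter (vertical · = true), up, funext fun l => by simpa [walkOf] using hstep l⟩
  · rintro ⟨s, u, rfl⟩ l
    exact (exists_step_iff _).1 ⟨_, _, rfl⟩

theorem card_isWalk_subtype_eq (P : (Fin n → ℤ × ℤ) → Prop) :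
    Nat.card {w // IsWalk w ∧ P w} =
      Nat.card {p : Finset (Fin n) × (Fin n → Bool) // P (walkOf p.1 p.2)} := by
  refine (Nat.card_eq_of_bijective (fun p => ⟨walkOf p.1.1 p.1.2,
    (isWalk_iff_exists_walkOf _).2 ⟨_, _, rfl⟩, p.2⟩) ⟨fun p q h => ?_, fun w => ?_⟩).symm
  · have := walkOf_injective2 (congrArg Subtype.val h)
    exact Subtype.ext (Prod.ext this.1 this.2)
  · obtain ⟨s, u, hw⟩ := (isWalk_iff_exists_walkOf w.1).1 w.2.1
    exact ⟨⟨(s, u), hw ▸ w.2.2⟩, Subtype.ext hw⟩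

theorem pos_walkOf (s : Finset (Fin n)) (u : Fin n → Bool) (a : ℕ) :
    pos (walkOf s u) a =
      (∑ l ∈ univ.filter (fun l : Fin n => (l : ℕ) < a), if l ∈ s then 0 else unitStep (u l),
        ∑ l ∈ univ.filter (fun l : Fin n => (l : ℕ) < a), if l ∈ s then unitStep (u l) else 0) := by
  ext <;> simp [pos, walkOf, step, Prod.fst_sum, Prod.snd_sum, apply_ite]

theorem halfPlane_walkOf_iff (s : Finset (Fin n)) (u : Fin n → Bool) :
    ((∀ a ≤ n, 0 ≤ (pos (walkOf s u) a).2) ∧ pos (walkOf s u) n = ((n : ℤ) % 2, 0)) ↔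
      IsExcursion (fun i : s => unitStep (u i)) ∧ ∑ i : {l // l ∉ s}, unitStep (u i) = n % 2 := by
  set f : Fin n → ℤ := fun l => if l ∈ s then unitStep (u l) else 0
  have hsub : (fun i : s => unitStep (u i)) = fun i : s => f i :=
    funext fun i => (if_pos i.2).symm
  have hx : ∑ l, (if l ∈ s then 0 else unitStep (u l)) = ∑ i : {l // l ∉ s}, unitStep (u i) := by
    rw [sum_ite, sum_const_zero, zero_add, sum_subtype _ (p := (· ∉ s)) (by simp)]
  rw [hsub, isExcursion_subtype_iff s (f := f) fun i hi => if_neg hi, isExcursion_fin_iff]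
  simp only [pos_walkOf, filter_val_lt_eq_univ le_rfl, Prod.ext_iff, hx]
  tauto

theorem card_halfPlane_walkOf (s : Finset (Fin n)) :
    Nat.card {u // (∀ a ≤ n, 0 ≤ (pos (walkOf s u) a).2) ∧
        pos (walkOf s u) n = ((n : ℤ) % 2, 0)} =
      if Even #s then catalan (#s / 2) * (n - #s).choose ((n + 1) / 2 - #s / 2) else 0 := by
  rw [Nat.card_congr ((Equiv.piEquivPiSubtypeProd (· ∈ s) fun _ => Bool).subtypeEquiv
      (q := fun p => IsExcursion (unitStep ∘ p.1) ∧ ∑ i, unitStep (p.2 i) = n % 2)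
      fun u => halfPlane_walkOf_iff s u), Nat.card_congr (Equiv.subtypeProdEquivProd
        (p := fun σ : s → Bool => IsExcursion (unitStep ∘ σ))
        (q := fun τ : {l // l ∉ s} → Bool => ∑ i, unitStep (τ i) = n % 2)), Nat.card_prod,
    card_isExcursion_congr (s.orderIsoOfFin rfl), card_isExcursion_eq_card_dyckWord,
    card_dyckWord_length]
  split_ifs with hs
  · have hle : #s ≤ n := by simpa using s.card_le_univ
    have hcard : Fintype.card {l // l ∉ s} = n - #s := by simp [Fintype.card_subtype_compl]
    obtain ⟨j, hj⟩ := hs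
    rw [card_sum_unitStep_eq _ (k := (n + 1) / 2 - #s / 2) (by rw [hcard]; omega), hcard]
  · rw [zero_mul]

end Walks

theorem sum_range_ite_even {M : Type*} [AddCommMonoid M] (n : ℕ) (f : ℕ → M) :
    ∑ j ∈ range (n + 1), (if Even j then f j else 0) = ∑ l ∈ range (n / 2 + 1), f (2 * l) := by
  rw [← sum_filter, ← sum_image (g := (2 * ·)) fun a _ b _ h => by simpa using h]
  congr 1
  ext j
  simp only [mem_filter, mem_range, mem_image, Nat.even_iff]
  constructor
  · rintro ⟨hj, heven⟩
    exact ⟨j / 2, by omega, by omega⟩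
  · rintro ⟨l, hl, rfl⟩
    omega

theorem cast_choose_mul_catalan_mul_choose (n l : ℕ) (hl : l ≤ n / 2) :
    ((n.choose (2 * l) * (catalan l * (n - 2 * l).choose ((n + 1) / 2 - l)) : ℕ) : ℚ) =
      1 / ((l : ℚ) + 1) * n.factorial /
        (l.factorial * l.factorial * (n / 2 - l).factorial * ((n + 1) / 2 - l).factorial) := by
  have hcatalan :
      (catalan l : ℚ) = (2 * l).factorial / (l.factorial * l.factorial * (l + 1)) := by
    have h := succ_mul_catalan_eq_centralBinom l
    rw [Nat.centralBinom_eq_two_mul_choose] at h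
    have h' := congrArg (Nat.cast : ℕ → ℚ) h
    rw [Nat.cast_mul, Nat.cast_choose ℚ (by omega : l ≤ 2 * l), show 2 * l - l = l by omega] at h'
    rw [eq_div_iff (by positivity)]
    field_simp at h'
    push_cast at h'
    linear_combination h'
  push_cast
  rw [Nat.cast_choose ℚ (by omega : 2 * l ≤ n),
    Nat.cast_choose ℚ (by omega : (n + 1) / 2 - l ≤ n - 2 * l),
    show n - 2 * l - ((n + 1) / 2 - l) = n / 2 - l by omega, hcatalan]
  field_simp

theorem card_eq_sum_choose_catalan (n : ℕ) :
    Nat.card {w : Fin n → ℤ × ℤ //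
      IsWalk w ∧ (∀ a ≤ n, 0 ≤ (pos w a).2) ∧ pos w n = ((n : ℤ) % 2, 0)} =
    ∑ l ∈ range (n / 2 + 1),
      n.choose (2 * l) * (catalan l * (n - 2 * l).choose ((n + 1) / 2 - l)) := by
  rw [card_isWalk_subtype_eq, Nat.card_congr (Equiv.subtypeProdEquivSigmaSubtype fun s u =>
      (∀ a ≤ n, 0 ≤ (pos (walkOf s u) a).2) ∧ pos (walkOf s u) n = ((n : ℤ) % 2, 0)),
    Nat.card_sigma]
  simp only [card_halfPlane_walkOf]
  rw [← powerset_univ, sum_powerset_apply_card (fun j =>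
      if Even j then catalan (j / 2) * (n - j).choose ((n + 1) / 2 - j / 2) else 0),
    card_univ, Fintype.card_fin]
  simp only [smul_eq_mul, mul_ite, mul_zero]
  rw [sum_range_ite_even]
  simp

end HalfPlaneWalk

theorem stmt15 (n : ℕ) :
    (Nat.card {w : Fin n → ℤ × ℤ //
      IsWalk w ∧ (∀ a ≤ n, 0 ≤ (pos w a).2) ∧ pos w n = ((n : ℤ) % 2, 0)} : ℚ) =
    ∑ l ∈ Finset.range (n / 2 + 1),
      (1 / ((l : ℚ) + 1)) * (Nat.factorial n) /
        ((Nat.factorial l) * (Nat.factorial l) *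
          (Nat.factorial (n / 2 - l)) * (Nat.factorial ((n + 1) / 2 - l))) := by
  rw [HalfPlaneWalk.card_eq_sum_choose_catalan, Nat.cast_sum]
  exact sum_congr rfl fun l hl =>
    HalfPlaneWalk.cast_choose_mul_catalan_mul_choose n l (by simpa [Nat.lt_succ_iff] using hl)
end

section
/- For every n ≥ 0, the number of lattice paths of length n that never go below the x-axis (Dyck path prefixes) equals the number of lattice paths of length n that end at height δ_n, where δ_n is the remainder of n modulo 2 (Grand Dyck paths). -/
/-- A lattice path of length `n`: each step is `+1` (U) or `-1` (D). -/
def IsPath {n : ℕ} (P : Fin n → ℤ) : Prop := ∀ l, P l = 1 ∨ P l = -1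

/-- Height of the path `P` at `x = a`: sum of the first `a` steps. -/
def ht {n : ℕ} (P : Fin n → ℤ) (a : ℕ) : ℤ :=
  ∑ l ∈ Finset.univ.filter (fun l : Fin n => (l : ℕ) < a), P l

/-!
Both `endCount n h` (all paths of length `n` ending at height `h`) and `nonnegEndCount n h`
(those never going below the axis) satisfy `x (n+1) h = x n (h-1) + x n (h+1)`, the latter only
for `h ≥ 0`, by splitting off the last step. Since `endCount n` is even in `h`, induction gives
the reflection principle `nonnegEndCount n h = endCount n h - endCount n (h+2)` for `h ≥ -1`.
Summing over `h ≥ 0` telescopes to `endCount n 0 + endCount n 1`, and by parity only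
`endCount n (n % 2)` is nonzero.
-/

open Finset

lemma Finset.sum_range_sub_add_two {G : Type*} [AddCommGroup G] (f : ℕ → G) (m : ℕ) :
    ∑ k ∈ range m, (f k - f (k + 2)) = f 0 + f 1 - f m - f (m + 1) := by
  induction m with
  | zero => simp
  | succ m ih => rw [sum_range_succ, ih]; abel

namespace LatticePath

def paths (n : ℕ) : Finset (Fin n → ℤ) := Fintype.piFinset fun _ => {1, -1}

lemma mem_paths {n : ℕ} {P : Fin n → ℤ} : P ∈ paths n ↔ IsPath P := by
  simp [paths, IsPath]

lemma natCard_isPath_and_eq_card (n : ℕ) (R : (Fin n → ℤ) → Prop) [DecidablePred R] :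
    Nat.card {P : Fin n → ℤ // IsPath P ∧ R P} = #{P ∈ paths n | R P} := by
  rw [← Nat.card_eq_finsetCard]
  exact Nat.card_congr (Equiv.subtypeEquivRight fun P => by rw [mem_filter, mem_paths])

lemma card_filter_paths_succ (n : ℕ) (R : (Fin (n + 1) → ℤ) → Prop) [DecidablePred R] :
    #{P ∈ paths (n + 1) | R P} =
      #{Q ∈ paths n | R (Fin.snoc Q 1)} + #{Q ∈ paths n | R (Fin.snoc Q (-1))} := by
  have hpaths : paths (n + 1) = ({1, -1} ×ˢ paths n).map (Fin.snocEquiv _).toEmbedding := by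
    have h := filter_piFinset_eq_map_snocEquiv (fun _ : Fin (n + 1) => ({1, -1} : Finset ℤ))
      fun _ => True
    simp only [filter_true] at h
    exact h
  simp only [card_filter, hpaths, sum_map, sum_product, sum_pair (show (1 : ℤ) ≠ -1 by decide)]
  rfl

lemma ht_snoc_of_le {n : ℕ} (Q : Fin n → ℤ) (s : ℤ) {a : ℕ} (ha : a ≤ n) :
    ht (Fin.snoc Q s : Fin (n + 1) → ℤ) a = ht Q a := by
  simp only [ht, sum_filter, Fin.sum_univ_castSucc, Fin.snoc_castSucc, Fin.val_castSucc,
    Fin.val_last, Fin.snoc_last]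
  rw [if_neg (by omega), add_zero]

lemma ht_snoc_last {n : ℕ} (Q : Fin n → ℤ) (s : ℤ) :
    ht (Fin.snoc Q s : Fin (n + 1) → ℤ) (n + 1) = ht Q n + s := by
  simp [ht, sum_filter, Fin.sum_univ_castSucc]

lemma ht_self_le {n : ℕ} {P : Fin n → ℤ} (hP : IsPath P) : ht P n ≤ n := by
  simp only [ht, Fin.is_lt, filter_true]
  simpa using sum_le_card_nsmul univ P 1 fun l _ => by rcases hP l with h | h <;> omega

lemma nonneg_snoc_iff {n : ℕ} (Q : Fin n → ℤ) (s : ℤ) :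
    (∀ a ≤ n + 1, 0 ≤ ht (Fin.snoc Q s : Fin (n + 1) → ℤ) a) ↔
      (∀ a ≤ n, 0 ≤ ht Q a) ∧ 0 ≤ ht Q n + s := by
  rw [← ht_snoc_last Q s]
  constructor
  · intro h
    exact ⟨fun a ha => ht_snoc_of_le Q s ha ▸ h a (by omega), h (n + 1) le_rfl⟩
  · rintro ⟨h, hlast⟩ a ha
    rcases ha.lt_or_eq with ha | rfl
    · exact ht_snoc_of_le Q s (Nat.lt_succ_iff.mp ha) ▸ h a (by omega)
    · exact hlast

def endCount (n : ℕ) (h : ℤ) : ℕ := #{P ∈ paths n | ht P n = h}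

def nonnegEndCount (n : ℕ) (h : ℤ) : ℕ :=
  #{P ∈ paths n | (∀ a ≤ n, 0 ≤ ht P a) ∧ ht P n = h}

lemma endCount_zero_left (h : ℤ) : endCount 0 h = if h = 0 then 1 else 0 := by
  by_cases h0 : h = 0 <;> simp [endCount, paths, ht, h0, eq_comm]

lemma nonnegEndCount_zero_left (h : ℤ) : nonnegEndCount 0 h = if h = 0 then 1 else 0 := by
  by_cases h0 : h = 0 <;> simp [nonnegEndCount, paths, ht, h0, eq_comm]

lemma endCount_succ (n : ℕ) (h : ℤ) :
    endCount (n + 1) h = endCount n (h - 1) + endCount n (h + 1) := by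
  simp only [endCount, card_filter_paths_succ, ht_snoc_last]
  congr 2 <;> refine filter_congr fun _ _ => ?_ <;> grind

lemma nonnegEndCount_succ (n : ℕ) {h : ℤ} (hh : 0 ≤ h) :
    nonnegEndCount (n + 1) h = nonnegEndCount n (h - 1) + nonnegEndCount n (h + 1) := by
  simp only [nonnegEndCount, card_filter_paths_succ, nonneg_snoc_iff, ht_snoc_last]
  congr 2 <;> refine filter_congr fun _ _ => ?_ <;> grind

lemma nonnegEndCount_of_neg (n : ℕ) {h : ℤ} (hh : h < 0) : nonnegEndCount n h = 0 :=
  card_eq_zero.mpr <| filter_eq_empty_iff.mpr fun _ _ ⟨hP, hend⟩ => by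
    have := hP n le_rfl
    omega

lemma endCount_neg (n : ℕ) (h : ℤ) : endCount n (-h) = endCount n h := by
  induction n generalizing h with
  | zero => simp [endCount_zero_left]
  | succ n ih =>
    rw [endCount_succ, endCount_succ, show -h - 1 = -(h + 1) by ring,
      show -h + 1 = -(h - 1) by ring, ih, ih, add_comm]

lemma endCount_eq_zero_of_lt {n : ℕ} {h : ℤ} (hh : n < h) : endCount n h = 0 := by
  induction n generalizing h with
  | zero => rw [endCount_zero_left, if_neg (by omega)]
  | succ n ih => rw [endCount_succ, ih (by omega), ih (by omega)]

lemma endCount_eq_zero_of_odd {n : ℕ} {h : ℤ} (hh : Odd (n + h)) : endCount n h = 0 := by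
  induction n generalizing h with
  | zero => rw [endCount_zero_left, if_neg]; rintro rfl; simp at hh
  | succ n ih =>
    simp_rw [Int.odd_iff] at hh ih
    rw [endCount_succ, ih (by omega), ih (by omega)]

lemma endCount_zero_add_endCount_one (n : ℕ) :
    endCount n 0 + endCount n 1 = endCount n (n % 2) := by
  rcases Int.emod_two_eq_zero_or_one (n : ℤ) with hn | hn <;> rw [hn]
  · rw [endCount_eq_zero_of_odd (h := 1) (Int.odd_iff.mpr (by omega)), add_zero]
  · rw [endCount_eq_zero_of_odd (h := 0) (Int.odd_iff.mpr (by omega)), zero_add]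

lemma nonnegEndCount_eq_sub (n : ℕ) {h : ℤ} (hh : -1 ≤ h) :
    (nonnegEndCount n h : ℤ) = endCount n h - endCount n (h + 2) := by
  induction n generalizing h with
  | zero =>
    simp only [nonnegEndCount_zero_left, endCount_zero_left]
    split_ifs <;> omega
  | succ n ih =>
    rcases hh.lt_or_eq with hh | rfl
    · rw [nonnegEndCount_succ n (by omega), endCount_succ, endCount_succ, Nat.cast_add,
        ih (by omega), ih (by omega), show h - 1 + 2 = h + 2 - 1 by ring,
        show h + 1 + 2 = h + 2 + 1 by ring]
      push_cast
      ring
    · rw [nonnegEndCount_of_neg _ (by norm_num), show (-1 : ℤ) + 2 = 1 by norm_num,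
        ← endCount_neg _ 1]
      simp

lemma card_nonneg_eq_sum_nonnegEndCount (n : ℕ) :
    #{P ∈ paths n | ∀ a ≤ n, 0 ≤ ht P a} = ∑ k ∈ range (n + 1), nonnegEndCount n k := by
  rw [card_eq_sum_card_fiberwise (f := fun P => ht P n)
    (t := (range (n + 1)).map Nat.castEmbedding), sum_map]
  · simp [nonnegEndCount, filter_filter]
  · intro P hP
    simp only [coe_filter, Set.mem_ofPred_eq, mem_paths] at hP
    have := hP.2 n le_rfl
    have := ht_self_le hP.1
    simp only [coe_map, coe_range, Set.mem_image, Set.mem_Iio]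
    exact ⟨(ht P n).toNat, by omega, by rw [Nat.castEmbedding_apply]; omega⟩

end LatticePath

open LatticePath in
theorem stmt16 (n : ℕ) :
    Nat.card {P : Fin n → ℤ // IsPath P ∧ ∀ a ≤ n, 0 ≤ ht P a} =
    Nat.card {P : Fin n → ℤ // IsPath P ∧ ht P n = (n : ℤ) % 2} := by
  rw [natCard_isPath_and_eq_card, natCard_isPath_and_eq_card, card_nonneg_eq_sum_nonnegEndCount]
  apply Nat.cast_injective (R := ℤ)
  calc ((∑ k ∈ range (n + 1), nonnegEndCount n k : ℕ) : ℤ)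
      = ∑ k ∈ range (n + 1), ((endCount n k : ℤ) - endCount n ((k + 2 : ℕ) : ℤ)) := by
        push_cast
        exact sum_congr rfl fun k _ => nonnegEndCount_eq_sub n (by omega)
    _ = endCount n 0 + endCount n 1 - endCount n (n + 1) - endCount n (n + 2) := by
        rw [sum_range_sub_add_two (fun k : ℕ => (endCount n k : ℤ))]
        push_cast
        rfl
    _ = endCount n (n % 2) := by
        rw [endCount_eq_zero_of_lt (h := n + 1) (by omega),
          endCount_eq_zero_of_lt (h := n + 2) (by omega),
          ← endCount_zero_add_endCount_one]
        push_cast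
        ring
end

section
/- For every n ≥ 0, the number of lattice paths of length n that never go below the x-axis (Dyck path prefixes) equals the binomial coefficient binomial(n, ⌊n/2⌋). -/
open Finset

section Paths

variable {n : ℕ}

theorem ht_zero (P : Fin n → ℤ) : ht P 0 = 0 := by
  simp [ht]

theorem ht_cons_succ (x : ℤ) (P : Fin n → ℤ) (a : ℕ) :
    ht (Fin.cons x P : Fin (n + 1) → ℤ) (a + 1) = x + ht P a := by
  simp [ht, sum_filter, Fin.sum_univ_succ]

theorem isPath_cons_iff {x : ℤ} {P : Fin n → ℤ} :
    IsPath (Fin.cons x P : Fin (n + 1) → ℤ) ↔ (x = 1 ∨ x = -1) ∧ IsPath P := by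
  simp only [IsPath, Fin.forall_fin_succ, Fin.cons_zero, Fin.cons_succ]

def IsNonnegPathFrom (h : ℤ) (P : Fin n → ℤ) : Prop :=
  IsPath P ∧ ∀ a ≤ n, 0 ≤ h + ht P a

theorem IsNonnegPathFrom.nonneg {h : ℤ} {P : Fin n → ℤ} (hP : IsNonnegPathFrom h P) :
    0 ≤ h := by
  simpa [ht_zero] using hP.2 0 (Nat.zero_le n)

theorem isNonnegPathFrom_cons_iff {h x : ℤ} {P : Fin n → ℤ} :
    IsNonnegPathFrom h (Fin.cons x P : Fin (n + 1) → ℤ) ↔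
      0 ≤ h ∧ (x = 1 ∨ x = -1) ∧ IsNonnegPathFrom (h + x) P := by
  have tail_iff : (∀ a ≤ n, 0 ≤ h + ht (Fin.cons x P : Fin (n + 1) → ℤ) (a + 1)) ↔
      ∀ a ≤ n, 0 ≤ h + x + ht P a := by
    simp only [ht_cons_succ, add_assoc]
  constructor
  · intro hP
    exact ⟨hP.nonneg, (isPath_cons_iff.1 hP.1).1, (isPath_cons_iff.1 hP.1).2,
      tail_iff.1 fun a ha => hP.2 (a + 1) (by omega)⟩
  · rintro ⟨hh, hx, hP, hnn⟩
    refine ⟨isPath_cons_iff.2 ⟨hx, hP⟩, fun a ha => ?_⟩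
    rcases a with _ | a
    · simpa [ht_zero] using hh
    · exact tail_iff.2 hnn a (by omega)

instance (h : ℤ) : Finite {P : Fin n → ℤ // IsNonnegPathFrom h P} := by
  refine Set.Finite.to_subtype ((Set.Finite.pi (t := fun _ => ({1, -1} : Set ℤ))
    fun _ => Set.toFinite _).subset fun P hP => ?_)
  exact fun i _ => by simpa using hP.1 i

variable (n) in
noncomputable def numNonnegPathsFrom (h : ℤ) : ℕ :=
  Nat.card {P : Fin n → ℤ // IsNonnegPathFrom h P}

theorem numNonnegPathsFrom_of_neg {h : ℤ} (hh : h < 0) : numNonnegPathsFrom n h = 0 := by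
  have : IsEmpty {P : Fin n → ℤ // IsNonnegPathFrom h P} := ⟨fun P => hh.not_ge P.2.nonneg⟩
  exact Nat.card_of_isEmpty

theorem numNonnegPathsFrom_zero {h : ℤ} (hh : 0 ≤ h) : numNonnegPathsFrom 0 h = 1 := by
  refine Nat.card_eq_one_iff_unique.2 ⟨⟨fun P Q => Subtype.ext (Subsingleton.elim _ _)⟩,
    ⟨⟨Fin.elim0, fun l => l.elim0, fun a _ => ?_⟩⟩⟩
  simpa [ht] using hh

theorem numNonnegPathsFrom_succ {h : ℤ} (hh : 0 ≤ h) :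
    numNonnegPathsFrom (n + 1) h =
      numNonnegPathsFrom n (h + 1) + numNonnegPathsFrom n (h - 1) := by
  let up (P : {P : Fin n → ℤ // IsNonnegPathFrom (h + 1) P}) :
      {P : Fin (n + 1) → ℤ // IsNonnegPathFrom h P} :=
    ⟨Fin.cons 1 P.1, isNonnegPathFrom_cons_iff.2 ⟨hh, .inl rfl, P.2⟩⟩
  let down (P : {P : Fin n → ℤ // IsNonnegPathFrom (h - 1) P}) :
      {P : Fin (n + 1) → ℤ // IsNonnegPathFrom h P} :=
    ⟨Fin.cons (-1) P.1, isNonnegPathFrom_cons_iff.2 ⟨hh, .inr rfl, P.2⟩⟩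
  have hbij : Function.Bijective (Sum.elim up down) := by
    refine ⟨?_, fun P => ?_⟩
    · rintro (P | P) (Q | Q) hPQ <;> simp_all [up, down, Fin.cons_inj, Subtype.ext_iff]
    · obtain ⟨P, hP⟩ := P
      rw [← Fin.cons_self_tail P] at hP
      obtain ⟨-, hx | hx, htail⟩ := isNonnegPathFrom_cons_iff.1 hP
      · rw [hx] at htail
        exact ⟨.inl ⟨Fin.tail P, htail⟩, Subtype.ext (by simp [up, ← hx])⟩
      · rw [hx, ← sub_eq_add_neg] at htail
        exact ⟨.inr ⟨Fin.tail P, htail⟩, Subtype.ext (by simp [down, ← hx])⟩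
  rw [numNonnegPathsFrom, numNonnegPathsFrom, numNonnegPathsFrom, ← Nat.card_sum]
  exact (Nat.card_eq_of_bijective _ hbij).symm

end Paths

theorem sum_range_choose_succ (n k : ℕ) :
    ∑ i ∈ range k, (n + 1).choose i =
      ∑ i ∈ range k, n.choose i + ∑ i ∈ range (k - 1), n.choose i := by
  rcases k with _ | k
  · simp
  rw [sum_range_succ', sum_range_succ' (fun i => n.choose i)]
  simp only [Nat.choose_succ_succ, sum_add_distrib, Nat.choose_zero_right, Nat.add_sub_cancel]
  ring

/-- For `h > n` the truncated `n - h` is `0`, which is the correct lower end of the window. -/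
theorem numNonnegPathsFrom_add_sum_choose (n h : ℕ) :
    numNonnegPathsFrom n h + ∑ k ∈ range ((n - h) / 2), n.choose k =
      ∑ k ∈ range ((n + h + 2) / 2), n.choose k := by
  induction n generalizing h with
  | zero =>
    obtain ⟨m, hm⟩ : ∃ m, (h + 2) / 2 = m + 1 := ⟨h / 2, by omega⟩
    simp [numNonnegPathsFrom_zero, hm, sum_range_succ']
  | succ n ih =>
    have hrec := numNonnegPathsFrom_succ (n := n) (Int.natCast_nonneg h)
    rw [sum_range_choose_succ, sum_range_choose_succ]
    rcases h with _ | h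
    · simp only [Nat.cast_zero, zero_add, zero_sub] at hrec
      rw [numNonnegPathsFrom_of_neg (h := -1) (by norm_num)] at hrec
      have ih1 := ih 1
      rw [show (n - 1) / 2 = (n + 1) / 2 - 1 by omega,
        show (n + 1 + 2) / 2 = (n + 1) / 2 + 1 by omega, Nat.cast_one] at ih1
      rw [show (n + 1 + 0 + 2) / 2 = (n + 1) / 2 + 1 by omega, Nat.add_sub_cancel, Nat.sub_zero,
        Nat.cast_zero]
      omega
    · have ih0 := ih h
      have ih2 := ih (h + 2)
      rw [show (n - (h + 2)) / 2 = (n - h) / 2 - 1 by omega,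
        show (n + (h + 2) + 2) / 2 = (n + h + 2) / 2 + 1 by omega] at ih2
      rw [show n + 1 - (h + 1) = n - h by omega,
        show (n + 1 + (h + 1) + 2) / 2 = (n + h + 2) / 2 + 1 by omega, Nat.add_sub_cancel]
      rw [show ((h + 1 : ℕ) : ℤ) + 1 = ((h + 2 : ℕ) : ℤ) by push_cast; ring,
        show ((h + 1 : ℕ) : ℤ) - 1 = h by push_cast; ring] at hrec
      omega

theorem stmt17 (n : ℕ) :
    Nat.card {P : Fin n → ℤ // IsPath P ∧ ∀ a ≤ n, 0 ≤ ht P a} =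
    Nat.choose n (n / 2) := by
  have hsum := numNonnegPathsFrom_add_sum_choose n 0
  rw [Nat.cast_zero, Nat.sub_zero, show (n + 0 + 2) / 2 = n / 2 + 1 by omega,
    sum_range_succ, add_comm, add_right_inj] at hsum
  rw [← hsum, numNonnegPathsFrom]
  simp only [IsNonnegPathFrom, zero_add]
end
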